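/- arXiv:1004.1065 — 3 statements merged into one kernel-verified Lean document; each statement's English description precedes it below -/
import Mathlib

section
/- For every admissible k-element set H = {h_1 < h_2 < ... < h_k} with k ≤ 8, the diameter h_k - h_1 is at least the diameter of the corresponding set in the list H_2={0,2}, H_3={0,2,6}, H_4={0,2,6,8}, H_5={0,4,6,10,12}, H_6={0,4,6,10,12,16}, H_7={0,2,6,8,12,18,20}, H_8={0,2,6,8,12,18,20,26}; that is, the minimal diameters for k=2,...,8 are 2, 6, 8, 12, 16, 20, 26 respectively. -/
/-- A finite set `H` of integers is admissible if for every prime `p` there is a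
residue class modulo `p` containing no element of `H`. -/
def Admissible (H : Finset ℤ) : Prop :=
  ∀ p : ℕ, p.Prime → ∃ a : ZMod p, ∀ h ∈ H, (h : ZMod p) ≠ a

/-- The minimal diameter of an admissible `k`-element set, for `2 ≤ k ≤ 8`. -/
def minDiam : ℕ → ℤ
  | 2 => 2
  | 3 => 6
  | 4 => 8
  | 5 => 12
  | 6 => 16
  | 7 => 20
  | 8 => 26
  | _ => 0

/-!
Translate `H` so that its minimum is `0`. For each prime `p`, the residue class mod `p` that the
translate avoids is then nonzero, since `0` lies in the translate. So a translate of diameter below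
`minDiam k` lies in `[0, minDiam k)` and avoids a nonzero class mod each of `2, 3, 5, 7`; for every
choice of those classes a direct count shows that fewer than `k` integers of `[0, minDiam k)` survive.
-/

theorem Admissible.exists_avoided_residue_sub {H : Finset ℤ} (hH : Admissible H) {m : ℤ}
    (hm : m ∈ H) {p : ℕ} (hp : p.Prime) :
    ∃ b ∈ Finset.Ioo 0 p, ∀ h ∈ H, (h - m) % p ≠ b := by
  have : NeZero p := ⟨hp.ne_zero⟩
  obtain ⟨a, ha⟩ := hH p hp
  refine ⟨(a - m).val, Finset.mem_Ioo.mpr ⟨Nat.pos_of_ne_zero fun h0 => ?_, ZMod.val_lt _⟩,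
    fun h hh hmod => ?_⟩
  · exact ha m hm (sub_eq_zero.mp ((ZMod.val_eq_zero _).mp h0)).symm
  · have hcast : ((h - m : ℤ) : ZMod p) = a - m := by
      rw [← ZMod.intCast_mod, hmod]
      simp
    push_cast at hcast
    exact ha h hh (by linear_combination hcast)

def sieveCount (D b₂ b₃ b₅ b₇ : ℕ) : ℕ :=
  ((Finset.range D).filter fun n => n % 2 ≠ b₂ ∧ n % 3 ≠ b₃ ∧ n % 5 ≠ b₅ ∧ n % 7 ≠ b₇).card

theorem sieveCount_minDiam_lt : ∀ k ∈ Finset.Icc 2 8, ∀ b₂ ∈ Finset.Ioo 0 2,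
    ∀ b₃ ∈ Finset.Ioo 0 3, ∀ b₅ ∈ Finset.Ioo 0 5, ∀ b₇ ∈ Finset.Ioo 0 7,
    sieveCount (minDiam k).toNat b₂ b₃ b₅ b₇ < k := by
  decide

theorem Admissible.card_le_sieveCount {H : Finset ℤ} (hH : Admissible H) {m : ℤ} (hm : m ∈ H)
    {D : ℕ} (hD : ∀ h ∈ H, m ≤ h ∧ h < m + D) :
    ∃ b₂ ∈ Finset.Ioo 0 2, ∃ b₃ ∈ Finset.Ioo 0 3, ∃ b₅ ∈ Finset.Ioo 0 5, ∃ b₇ ∈ Finset.Ioo 0 7,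
      H.card ≤ sieveCount D b₂ b₃ b₅ b₇ := by
  obtain ⟨b₂, hb₂, h₂⟩ := hH.exists_avoided_residue_sub hm Nat.prime_two
  obtain ⟨b₃, hb₃, h₃⟩ := hH.exists_avoided_residue_sub hm Nat.prime_three
  obtain ⟨b₅, hb₅, h₅⟩ := hH.exists_avoided_residue_sub hm Nat.prime_five
  obtain ⟨b₇, hb₇, h₇⟩ := hH.exists_avoided_residue_sub hm Nat.prime_seven
  refine ⟨b₂, hb₂, b₃, hb₃, b₅, hb₅, b₇, hb₇, ?_⟩
  have hinj : Set.InjOn (fun h => (h - m).toNat) H := fun x hx y hy hxy => by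
    have := hD x hx; have := hD y hy
    simp only at hxy
    omega
  rw [sieveCount, ← Finset.card_image_of_injOn hinj]
  refine Finset.card_le_card fun n hn => ?_
  obtain ⟨h, hh, rfl⟩ := Finset.mem_image.mp hn
  have := hD h hh; have := h₂ h hh; have := h₃ h hh; have := h₅ h hh; have := h₇ h hh
  simp only [Finset.mem_filter, Finset.mem_range]
  omega

theorem minimal_diameter (k : ℕ) (hk2 : 2 ≤ k) (hk8 : k ≤ 8)
    (H : Finset ℤ) (hcard : H.card = k) (hadm : Admissible H) :
    minDiam k ≤
      H.max' (Finset.card_pos.mp (by omega)) - H.min' (Finset.card_pos.mp (by omega)) := by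
  have hne : H.Nonempty := Finset.card_pos.mp (by omega)
  by_contra! hlt
  have hD : ∀ h ∈ H, H.min' hne ≤ h ∧ h < H.min' hne + (minDiam k).toNat := fun h hh =>
    ⟨H.min'_le h hh, by have := H.le_max' h hh; omega⟩
  obtain ⟨b₂, hb₂, b₃, hb₃, b₅, hb₅, b₇, hb₇, hle⟩ := hadm.card_le_sieveCount (H.min'_mem hne) hD
  have := sieveCount_minDiam_lt k (Finset.mem_Icc.mpr ⟨hk2, hk8⟩) b₂ hb₂ b₃ hb₃ b₅ hb₅ b₇ hb₇
  omega
end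

section
/- Let k ≥ 2, P = ∏_{p≤k} p, U a positive multiple of P, M = (φ(P)/P)U. Suppose D is a set of positive integers such that for every k-element subset H of {m ≤ U : gcd(m,P)=1} and every even r ∈ [1,U] \ H, either some difference h_j − h_i (i < j, h_i, h_j ∈ H) lies in D, or |r − h_i| ∈ D for some h_i ∈ H. Then the number of elements of D in [1, U] is at least U·(4k + k(k−1)P/φ(P))^{−1}·(1 + o(1)) as U → ∞; in particular the lower density of D is at least (4k + k(k−1)P/φ(P))^{−1}. -/
/-!
Split on whether the reduced residues `C = {m ≤ U : gcd(m, P) = 1}` contain a `k`-set `H` with no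
difference in `D`. If they do, every even `r ∉ H` up to `U` is at distance `d ∈ D` from some
`h ∈ H`, and a pair `(h, d)` accounts for at most two such `r`: hence `U / 2 ≤ k (2 |D ∩ [1, U]| + 1)`.
If they do not, a maximal difference-free `S ⊆ C` has fewer than `k` elements and every other
element of `C` is at distance in `D` from `S`, so `φ(P) U / P ≤ |C| ≤ (k - 1)(2 |D ∩ [1, U]| + 1)`.
Both `1 / (4k)` and `φ(P) / (2(k - 1)P)` are at least `1 / (4k + k(k-1)P/φ(P))`, so either way
`|D ∩ [1, U]| ≥ U / (4k + k(k-1)P/φ(P)) - O(1)` along the multiples of `P`, and monotonicity of the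
counting function passes this to all `U`.
-/

open Finset Filter

def HasDiffIn (D : Set ℕ) (H : Finset ℕ) : Prop :=
  ∃ a ∈ H, ∃ b ∈ H, a < b ∧ b - a ∈ D

open scoped Classical in
noncomputable def countIn (D : Set ℕ) (U : ℕ) : ℕ :=
  #{d ∈ Icc 1 U | d ∈ D}

theorem countIn_mono (D : Set ℕ) : Monotone (countIn D) := by
  classical
  exact fun _ _ hab => card_le_card (filter_subset_filter _ (Icc_subset_Icc_right hab))

theorem countIn_le (D : Set ℕ) (U : ℕ) : countIn D U ≤ U := by
  classical
  simpa [countIn] using card_filter_le (Icc 1 U) (· ∈ D)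

section Counting

variable {D : Set ℕ} {U : ℕ}

theorem card_le_two_mul_card_mul_countIn {E W : Finset ℕ} (hE : E ⊆ Icc 1 U)
    (hW : W ⊆ Icc 1 U) (hEW : Disjoint E W)
    (hcov : ∀ r ∈ E, ∃ h ∈ W, ((r : ℤ) - h).natAbs ∈ D) :
    #E ≤ 2 * #W * countIn D U := by
  classical
  set DU := {d ∈ Icc 1 U | d ∈ D}
  have hsub : E ⊆ (W ×ˢ DU).biUnion fun p => {p.1 + p.2, p.1 - p.2} := by
    intro r hr
    obtain ⟨h, hh, hD⟩ := hcov r hr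
    have hr' := mem_Icc.mp (hE hr)
    have hh' := mem_Icc.mp (hW hh)
    have hne : r ≠ h := fun e => disjoint_left.mp hEW hr (e ▸ hh)
    simp only [mem_biUnion, mem_product, mem_insert, mem_singleton, Prod.exists]
    refine ⟨h, _, ⟨hh, mem_filter.mpr ⟨mem_Icc.mpr ⟨?_, ?_⟩, hD⟩⟩, ?_⟩ <;> omega
  calc #E ≤ ∑ p ∈ W ×ˢ DU, #({p.1 + p.2, p.1 - p.2} : Finset ℕ) :=
        (card_le_card hsub).trans card_biUnion_le
    _ ≤ ∑ _p ∈ W ×ˢ DU, 2 := sum_le_sum fun _ _ => card_le_two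
    _ = 2 * #W * countIn D U := by
        rw [sum_const, card_product, smul_eq_mul, countIn]; ring

theorem half_le_of_covers_evens {H : Finset ℕ} (hH : H ⊆ Icc 1 U)
    (hcov : ∀ r ∈ Icc 1 U, 2 ∣ r → r ∉ H → ∃ h ∈ H, ((r : ℤ) - h).natAbs ∈ D) :
    U / 2 ≤ #H * (2 * countIn D U + 1) := by
  have hE : #({r ∈ Icc 1 U | 2 ∣ r} \ H) ≤ 2 * #H * countIn D U :=
    card_le_two_mul_card_mul_countIn (sdiff_subset.trans (filter_subset _ _)) hH
      sdiff_disjoint fun r hr => by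
        obtain ⟨hr, hrH⟩ := mem_sdiff.mp hr
        exact hcov r (mem_filter.mp hr).1 (mem_filter.mp hr).2 hrH
  calc U / 2 = #{r ∈ Icc 1 U | 2 ∣ r} := (Nat.Ioc_filter_dvd_card_eq_div U 2).symm
    _ ≤ #({r ∈ Icc 1 U | 2 ∣ r} \ H) + #H := card_le_card_sdiff_add_card
    _ ≤ #H * (2 * countIn D U + 1) := by linarith

theorem card_le_of_covers {C S : Finset ℕ} (hC : C ⊆ Icc 1 U) (hS : S ⊆ C)
    (hcov : ∀ c ∈ C, c ∉ S → ∃ s ∈ S, ((c : ℤ) - s).natAbs ∈ D) :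
    #C ≤ #S * (2 * countIn D U + 1) := by
  have hCS : #(C \ S) ≤ 2 * #S * countIn D U :=
    card_le_two_mul_card_mul_countIn (sdiff_subset.trans hC) (hS.trans hC) sdiff_disjoint
      fun c hc => hcov c (mem_sdiff.mp hc).1 (mem_sdiff.mp hc).2
  calc #C ≤ #(C \ S) + #S := card_le_card_sdiff_add_card
    _ ≤ #S * (2 * countIn D U + 1) := by linarith

end Counting

theorem not_hasDiffIn_insert {D : Set ℕ} {S : Finset ℕ} {c : ℕ} (hS : ¬HasDiffIn D S)
    (hc : ∀ s ∈ S, ((c : ℤ) - s).natAbs ∉ D) : ¬HasDiffIn D (insert c S) := by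
  rintro ⟨a, ha, b, hb, hab, hD⟩
  rcases mem_insert.mp ha with rfl | haS <;> rcases mem_insert.mp hb with rfl | hbS
  · omega
  · exact hc b hbS (by rwa [show ((a : ℤ) - b).natAbs = b - a by omega])
  · exact hc a haS (by rwa [show ((b : ℤ) - a).natAbs = b - a by omega])
  · exact hS ⟨a, haS, b, hbS, hab, hD⟩

theorem exists_maximal_not_hasDiffIn (D : Set ℕ) (C : Finset ℕ) :
    ∃ S ⊆ C, ¬HasDiffIn D S ∧ ∀ c ∈ C, c ∉ S → ∃ s ∈ S, ((c : ℤ) - s).natAbs ∈ D := by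
  classical
  obtain ⟨S, hS, hmax⟩ :=
    exists_max_image {S ∈ C.powerset | ¬HasDiffIn D S} card ⟨∅, by simp [HasDiffIn]⟩
  obtain ⟨hSC, hSD⟩ := mem_filter.mp hS
  refine ⟨S, mem_powerset.mp hSC, hSD, fun c hc hcS => ?_⟩
  by_contra! hfar
  have := hmax (insert c S) <| mem_filter.mpr
    ⟨mem_powerset.mpr (insert_subset hc (mem_powerset.mp hSC)), not_hasDiffIn_insert hSD hfar⟩
  rw [card_insert_of_notMem hcS] at this
  omega

theorem covering_dichotomy {D : Set ℕ} {U k : ℕ} {C : Finset ℕ} (hC : C ⊆ Icc 1 U)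
    (hcover : ∀ H ⊆ C, #H = k → ∀ r ∈ Icc 1 U, 2 ∣ r → r ∉ H →
      HasDiffIn D H ∨ ∃ h ∈ H, ((r : ℤ) - h).natAbs ∈ D) :
    U / 2 ≤ k * (2 * countIn D U + 1) ∨ #C ≤ (k - 1) * (2 * countIn D U + 1) := by
  by_cases hfree : ∃ H ⊆ C, #H = k ∧ ¬HasDiffIn D H
  · obtain ⟨H, hHC, hHk, hHD⟩ := hfree
    left
    rw [← hHk]
    exact half_le_of_covers_evens (hHC.trans hC) fun r hr hr2 hrH =>
      (hcover H hHC hHk r hr hr2 hrH).resolve_left hHD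
  · right
    push Not at hfree
    obtain ⟨S, hSC, hSD, hcov⟩ := exists_maximal_not_hasDiffIn D C
    have hSk : #S ≤ k - 1 := by
      by_contra! hlt
      obtain ⟨H, hHS, hHk⟩ := exists_subset_card_eq (s := S) (n := k) (by omega)
      obtain ⟨a, ha, b, hb, hab, hD⟩ := hfree H (hHS.trans hSC) hHk
      exact hSD ⟨a, hHS ha, b, hHS hb, hab, hD⟩
    exact (card_le_of_covers hC hSC hcov).trans (Nat.mul_le_mul_right _ hSk)

theorem totient_mul_le_card_filter_coprime (P q : ℕ) :
    P.totient * q ≤ #{m ∈ Icc 1 (P * q) | Nat.gcd m P = 1} := by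
  induction q with
  | zero => simp
  | succ q ih =>
    have hblock : #{m ∈ Ico (P * q + 1) (P * q + 1 + P) | Nat.gcd m P = 1} = P.totient := by
      simp_rw [← Nat.filter_coprime_Ico_eq_totient P (P * q + 1), Nat.coprime_comm]
    have hunion : {m ∈ Icc 1 (P * q) | Nat.gcd m P = 1} ∪
        {m ∈ Ico (P * q + 1) (P * q + 1 + P) | Nat.gcd m P = 1} ⊆
        {m ∈ Icc 1 (P * (q + 1)) | Nat.gcd m P = 1} := by
      rw [← filter_union]
      refine filter_subset_filter _ fun m hm => ?_
      simp only [mem_union, mem_Icc, mem_Ico, mul_add_one] at hm ⊢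
      omega
    have hdisj : Disjoint (Icc 1 (P * q)) (Ico (P * q + 1) (P * q + 1 + P)) :=
      disjoint_left.mpr fun m h1 h2 => by simp only [mem_Icc, mem_Ico] at h1 h2; omega
    calc P.totient * (q + 1) ≤ #{m ∈ Icc 1 (P * q) | Nat.gcd m P = 1} +
          #{m ∈ Ico (P * q + 1) (P * q + 1 + P) | Nat.gcd m P = 1} := by
          rw [hblock, mul_add_one]; omega
      _ ≤ _ := by
          rw [← card_union_of_disjoint (disjoint_filter_filter hdisj)]
          exact card_le_card hunion

theorem mul_sub_one_le_countIn_add_half {D : Set ℕ} {k P U : ℕ} (hP : 0 < P) (hU : 0 < U)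
    (hPU : P ∣ U) {γ : ℝ} (hγ : 0 ≤ γ) (hγk : γ * (4 * k) ≤ 1)
    (hγP : γ * (2 * (k - 1) * P) ≤ P.totient)
    (hcover : ∀ H ⊆ {m ∈ Icc 1 U | Nat.gcd m P = 1}, #H = k → ∀ r ∈ Icc 1 U, 2 ∣ r → r ∉ H →
      HasDiffIn D H ∨ ∃ h ∈ H, ((r : ℤ) - h).natAbs ∈ D) :
    γ * (U - 1) ≤ countIn D U + 1 / 2 := by
  have hcases := covering_dichotomy (filter_subset _ _) hcover
  set f := countIn D U
  rcases hcases with hhalf | hcoprime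
  · have hU' : (U : ℝ) - 1 ≤ 2 * k * (2 * f + 1) := by
      have : U ≤ 2 * (k * (2 * f + 1)) + 1 := by omega
      have : (U : ℝ) ≤ 2 * (k * (2 * f + 1)) + 1 := by exact_mod_cast this
      linarith
    have hf : (0 : ℝ) ≤ 2 * f + 1 := by positivity
    nlinarith [mul_le_mul_of_nonneg_left hU' hγ, mul_le_mul_of_nonneg_right hγk hf]
  · obtain ⟨q, rfl⟩ := hPU
    have hq : 0 < q := Nat.pos_of_mul_pos_left hU
    have htot := (totient_mul_le_card_filter_coprime P q).trans hcoprime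
    have hk : 2 ≤ k := by
      have := Nat.mul_pos (Nat.totient_pos.mpr hP) hq
      by_contra! hk
      simp [show k - 1 = 0 by omega] at htot
      omega
    have htot' : (P.totient : ℝ) * q ≤ (k - 1) * (2 * f + 1) := by
      rw [← Nat.cast_pred (by omega)]; exact_mod_cast htot
    have hk' : (1 : ℝ) ≤ k - 1 := by
      have : (2 : ℝ) ≤ k := by exact_mod_cast hk
      linarith
    have hPq : γ * (2 * (k - 1) * P) * q ≤ P.totient * q :=
      mul_le_mul_of_nonneg_right hγP (Nat.cast_nonneg q)
    push_cast at hPq ⊢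
    nlinarith

theorem le_liminf_div_of_le_at_multiples {f : ℕ → ℕ} (hmono : Monotone f) (hle : ∀ n, f n ≤ n)
    {P : ℕ} (hP : 0 < P) {γ A : ℝ} (hγ : 0 ≤ γ)
    (hmul : ∀ U, 0 < U → P ∣ U → γ * U ≤ f U + A) :
    γ ≤ liminf (fun n => (f n : ℝ) / n) atTop := by
  refine le_of_forall_lt_imp_le_of_dense fun c hc => ?_
  have hbdd : IsCoboundedUnder (· ≥ ·) atTop fun n => (f n : ℝ) / n :=
    (isBoundedUnder_of ⟨1, fun n =>
      div_le_one_of_le₀ (by exact_mod_cast hle n) (Nat.cast_nonneg n)⟩).isCoboundedUnder_ge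
  refine le_liminf_of_le hbdd ?_
  have hlarge : ∀ᶠ n : ℕ in atTop, γ * P + A ≤ (γ - c) * n :=
    (tendsto_natCast_atTop_atTop.const_mul_atTop (sub_pos.mpr hc)).eventually_ge_atTop _
  filter_upwards [hlarge, eventually_ge_atTop P] with n hn hnP
  have hU := hmul (P * (n / P)) (Nat.mul_pos hP (Nat.div_pos hnP hP)) (dvd_mul_right _ _)
  have hnU : (n : ℝ) - P ≤ (P * (n / P) : ℕ) := by
    have : n < P * (n / P + 1) := Nat.lt_mul_div_succ n hP
    have : (n : ℝ) < (P * (n / P + 1) : ℕ) := by exact_mod_cast this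
    push_cast at this ⊢
    linarith
  have hfU : (f (P * (n / P)) : ℝ) ≤ f n := by exact_mod_cast hmono (Nat.mul_div_le n P)
  rw [le_div_iff₀ (Nat.cast_pos.mpr (hP.trans_le hnP))]
  nlinarith [mul_le_mul_of_nonneg_left hnU hγ]

theorem inv_density_constant_mul_le (k : ℕ) {P φ : ℝ} (hP : 0 ≤ P) (hφ : 0 < φ) :
    0 ≤ (4 * k + k * (k - 1) * P / φ)⁻¹ ∧ (4 * k + k * (k - 1) * P / φ)⁻¹ * (4 * k) ≤ 1 ∧
      (4 * k + k * (k - 1) * P / φ)⁻¹ * (2 * (k - 1) * P) ≤ φ := by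
  have hkk : (0 : ℝ) ≤ k * (k - 1) := by
    rcases k with _ | k
    · simp
    · push_cast; nlinarith
  have hk2 : (2 : ℝ) * (k - 1) ≤ k * (k - 1) := by
    rcases Nat.lt_or_ge k 2 with hk | hk
    · interval_cases k <;> norm_num
    · have : (2 : ℝ) ≤ k := by exact_mod_cast hk
      nlinarith
  have hy : 0 ≤ k * (k - 1) * P / φ := by positivity
  have hy0 : 0 ≤ 4 * k + k * (k - 1) * P / φ := by positivity
  refine ⟨inv_nonneg.mpr hy0, inv_mul_le_one_of_le₀ (by linarith) hy0, ?_⟩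
  have : 2 * (k - 1) * P / φ ≤ k * (k - 1) * P / φ := by gcongr
  calc (4 * k + k * (k - 1) * P / φ)⁻¹ * (2 * (k - 1) * P)
      = φ * ((4 * k + k * (k - 1) * P / φ)⁻¹ * (2 * (k - 1) * P / φ)) := by
        field_simp
    _ ≤ φ * 1 := by
        gcongr
        exact inv_mul_le_one_of_le₀ (by linarith) hy0
    _ = φ := mul_one φ

open scoped Classical in
theorem lower_density_bound_general (k : ℕ)
    (P : ℕ) (hP : P = ∏ p ∈ Finset.filter Nat.Prime (Finset.range (k + 1)), p)
    (D : Set ℕ)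
    (hcover : ∀ U : ℕ, 0 < U → P ∣ U →
      ∀ H : Finset ℕ,
        H ⊆ (Finset.Icc 1 U).filter (fun m => Nat.gcd m P = 1) → H.card = k →
      ∀ r ∈ Finset.Icc 1 U, 2 ∣ r → r ∉ H →
        (∃ a ∈ H, ∃ b ∈ H, a < b ∧ b - a ∈ D) ∨
        (∃ h ∈ H, ((r : ℤ) - (h : ℤ)).natAbs ∈ D)) :
    Filter.atTop.liminf
        (fun U : ℕ => (((Finset.Icc 1 U).filter (fun d => d ∈ D)).card : ℝ) / U) ≥
      (4 * (k : ℝ) + (k : ℝ) * ((k : ℝ) - 1) * (P : ℝ) / (Nat.totient P : ℝ))⁻¹ := by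
  have hP0 : 0 < P := hP ▸ prod_pos fun p hp => (mem_filter.mp hp).2.pos
  obtain ⟨hγ, hγk, hγP⟩ := inv_density_constant_mul_le k (Nat.cast_nonneg P)
    (Nat.cast_pos.mpr (Nat.totient_pos.mpr hP0))
  set γ := (4 * (k : ℝ) + k * (k - 1) * P / P.totient)⁻¹
  refine le_liminf_div_of_le_at_multiples (countIn_mono D) (countIn_le D) hP0 (A := γ + 1 / 2)
    hγ fun U hU hPU => ?_
  have := mul_sub_one_le_countIn_add_half hP0 hU hPU hγ hγk hγP (hcover U hU hPU)
  linarith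

open scoped Classical in
theorem lower_density_bound (k : ℕ) (hk : 2 ≤ k)
    (P : ℕ) (hP : P = ∏ p ∈ Finset.filter Nat.Prime (Finset.range (k + 1)), p)
    (D : Set ℕ)
    (hcover : ∀ U : ℕ, 0 < U → P ∣ U →
      ∀ H : Finset ℕ,
        H ⊆ (Finset.Icc 1 U).filter (fun m => Nat.gcd m P = 1) → H.card = k →
      ∀ r ∈ Finset.Icc 1 U, 2 ∣ r → r ∉ H →
        (∃ a ∈ H, ∃ b ∈ H, a < b ∧ b - a ∈ D) ∨
        (∃ h ∈ H, ((r : ℤ) - (h : ℤ)).natAbs ∈ D)) :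
    Filter.atTop.liminf
        (fun U : ℕ => (((Finset.Icc 1 U).filter (fun d => d ∈ D)).card : ℝ) / U) ≥
      (4 * (k : ℝ) + (k : ℝ) * ((k : ℝ) - 1) * (P : ℝ) / (Nat.totient P : ℝ))⁻¹ :=
  lower_density_bound_general k P hP D hcover
end

section
/- Suppose t* is the largest integer t with 6t ≤ U and 6t ∉ D, where D is a set of positive even integers such that for every s with 0 < s < 3t* at least one of 2s, 6t* − 2s, 6t* belongs to D, and 6t ∈ D for t* < t ≤ U/6. Then #(D ∩ [1, U]) ≥ ⌊U/6⌋. -/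
/-!
Each `t ≤ t*` contributes one element of the pair `{2t, 6t* - 2t}` lying in `D`, and these
pairs are disjoint subsets of `[1, 6t*)`; by maximality of `t*`, every `6t` with
`t* < t ≤ ⌊U/6⌋` lies in `D`, and these lie in `(6t*, U]`. Together this gives
`t* + (⌊U/6⌋ - t*)` elements of `D ∩ [1, U]`.
-/

open Finset

section
variable (D : Set ℕ) [DecidablePred (· ∈ D)]

theorem le_card_filter_Ico_of_pair_mem {k c : ℕ} (hkc : 4 * k ≤ c)
    (hpair : ∀ t, 1 ≤ t → t ≤ k → 2 * t ∈ D ∨ c - 2 * t ∈ D) :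
    k ≤ #((Ico 1 c).filter (· ∈ D)) := by
  let pick : ℕ → ℕ := fun t => if 2 * t ∈ D then 2 * t else c - 2 * t
  have maps_to : ∀ t ∈ Icc 1 k, pick t ∈ (Ico 1 c).filter (· ∈ D) := by
    intro t ht
    rw [mem_Icc] at ht
    simp only [pick, mem_filter, mem_Ico]
    split_ifs with h
    · exact ⟨by omega, h⟩
    · exact ⟨by omega, (hpair t ht.1 ht.2).resolve_left h⟩
  have inj : Set.InjOn pick (Icc 1 k) := by
    intro a ha b hb hab
    simp only [coe_Icc, Set.mem_Icc] at ha hb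
    simp only [pick] at hab
    split_ifs at hab <;> omega
  simpa using card_le_card_of_injOn pick maps_to inj

theorem sub_le_card_filter_Ioc_of_mul_mem {a n c : ℕ} (hc : 0 < c)
    (hmem : ∀ t, a < t → t ≤ n → c * t ∈ D) :
    n - a ≤ #((Ioc (c * a) (c * n)).filter (· ∈ D)) := by
  have maps_to : ∀ t ∈ Ioc a n, c * t ∈ (Ioc (c * a) (c * n)).filter (· ∈ D) := by
    intro t ht
    rw [mem_Ioc] at ht
    simp only [mem_filter, mem_Ioc]
    exact ⟨⟨Nat.mul_lt_mul_of_pos_left ht.1 hc, Nat.mul_le_mul_left c ht.2⟩,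
      hmem t ht.1 ht.2⟩
  have inj : Set.InjOn (c * ·) (Ioc a n) := fun x _ y _ h => Nat.eq_of_mul_eq_mul_left hc h
  simpa using card_le_card_of_injOn (c * ·) maps_to inj

end

open scoped Classical in
theorem counting_D_elements_general (U tstar : ℕ) (D : Set ℕ)
    (h1 : 6 * tstar ≤ U) (h2 : 6 * tstar ∉ D)
    (hmax : ∀ t : ℕ, 6 * t ≤ U → 6 * t ∉ D → t ≤ tstar)
    (hpair : ∀ s : ℕ, 0 < s → s < 3 * tstar →
      (2 * s ∈ D ∨ 6 * tstar - 2 * s ∈ D ∨ 6 * tstar ∈ D)) :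
    U / 6 ≤ ((Finset.Icc 1 U).filter (fun d => d ∈ D)).card := by
  have low := le_card_filter_Ico_of_pair_mem D (k := tstar) (c := 6 * tstar) (by omega)
    fun t ht1 ht2 => (hpair t ht1 (by omega)).imp_right (·.resolve_right h2)
  have high := sub_le_card_filter_Ioc_of_mul_mem D (a := tstar) (n := U / 6) (by norm_num)
    fun t ht hle => by_contra fun h => absurd (hmax t (by omega) h) (by omega)
  have disj : Disjoint ((Ico 1 (6 * tstar)).filter (· ∈ D))
      ((Ioc (6 * tstar) (6 * (U / 6))).filter (· ∈ D)) :=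
    disjoint_filter_filter <| disjoint_left.2 fun d hd hd' => by
      simp only [mem_Ico, mem_Ioc] at hd hd'
      omega
  calc U / 6 ≤ tstar + (U / 6 - tstar) := by omega
    _ ≤ _ := add_le_add low high
    _ = _ := (card_union_of_disjoint disj).symm
    _ ≤ _ := by
      rw [← filter_union]
      exact card_le_card (filter_subset_filter _ fun d hd => by
        simp only [mem_union, mem_Ico, mem_Ioc, mem_Icc] at hd ⊢; omega)

open scoped Classical in
theorem counting_D_elements (U tstar : ℕ) (D : Set ℕ)
    (hD : ∀ d ∈ D, 0 < d ∧ 2 ∣ d)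
    (h1 : 6 * tstar ≤ U) (h2 : 6 * tstar ∉ D)
    (hmax : ∀ t : ℕ, 6 * t ≤ U → 6 * t ∉ D → t ≤ tstar)
    (hpair : ∀ s : ℕ, 0 < s → s < 3 * tstar →
      (2 * s ∈ D ∨ 6 * tstar - 2 * s ∈ D ∨ 6 * tstar ∈ D)) :
    U / 6 ≤ ((Finset.Icc 1 U).filter (fun d => d ∈ D)).card :=
  counting_D_elements_general U tstar D h1 h2 hmax hpair
end
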